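/- There exists a packing of $K_{4(2)}$ by four edge-disjoint copies of $K_4-e$ whose leave is a 4-cycle. Explicitly, on $\{0,\dots,7\}$ with parts $\{i,i+4\}$ for $i=0,1,2,3$, the copies $[0,1,2-3]$, $[0,5,6-7]$, $[1,4,6-7]$, $[4,5,2-3]$ leave exactly the 4-cycle with edges $\{2,3\},\{3,6\},\{6,7\},\{7,2\}$. -/

import Mathlib

open SimpleGraph Finset

/-- `K₄ - e`: the complete graph on `{0,1,2,3}` minus the edge `{2,3}`.
In the block notation `[a,b,c-d]`, `a = 0`, `b = 1`, `c = 2`, `d = 3`. -/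
def K4e : SimpleGraph (Fin 4) where
  Adj x y := x ≠ y ∧ ¬(x = 2 ∧ y = 3) ∧ ¬(x = 3 ∧ y = 2)
  symm := by
    refine ⟨?_⟩
    intro x y h
    exact ⟨h.1.symm, fun hc => h.2.2 ⟨hc.2, hc.1⟩, fun hc => h.2.1 ⟨hc.2, hc.1⟩⟩
  loopless := ⟨fun x h => h.1 rfl⟩

instance : DecidableRel K4e.Adj :=
  fun x y => inferInstanceAs (Decidable (x ≠ y ∧ ¬(x = 2 ∧ y = 3) ∧ ¬(x = 3 ∧ y = 2)))

/-- The edge set of the copy of `K₄ - e` with vertices `f 0, f 1, f 2, f 3`. -/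
def copyEdges {V : Type*} (f : Fin 4 → V) : Set (Sym2 V) :=
  Sym2.map f '' K4e.edgeSet

/-- `B` is a packing of `H` by edge-disjoint copies of `K₄ - e`. -/
def IsK4ePacking {V : Type*} (H : SimpleGraph V) (B : Finset (Fin 4 → V)) : Prop :=
  (∀ f ∈ B, Function.Injective f) ∧
  (∀ f ∈ B, copyEdges f ⊆ H.edgeSet) ∧
  (∀ f ∈ B, ∀ g ∈ B, f ≠ g → Disjoint (copyEdges f) (copyEdges g))

/-- The leave of a packing: the edges of `H` covered by no copy. -/
def leave {V : Type*} (H : SimpleGraph V) (B : Finset (Fin 4 → V)) : Set (Sym2 V) :=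
  H.edgeSet \ ⋃ f ∈ B, copyEdges f

/-- `B` is a decomposition of `H` into edge-disjoint copies of `K₄ - e`. -/
def IsK4eDecomp {V : Type*} (H : SimpleGraph V) (B : Finset (Fin 4 → V)) : Prop :=
  IsK4ePacking H B ∧ ∀ e ∈ H.edgeSet, ∃ f ∈ B, e ∈ copyEdges f

/-- The complete 4-partite graph with parts `{i, i+4}`, `0 ≤ i ≤ 3`, on `Fin 8`. -/
def K4x2 : SimpleGraph (Fin 8) where
  Adj x y := x.val % 4 ≠ y.val % 4
  symm := ⟨fun _ _ h => h.symm⟩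
  loopless := ⟨fun _ h => h rfl⟩

instance : DecidableRel K4x2.Adj :=
  fun x y => inferInstanceAs (Decidable (x.val % 4 ≠ y.val % 4))

section copyEdges

variable {V : Type*}

lemma mem_copyEdges {f : Fin 4 → V} {e : Sym2 V} :
    e ∈ copyEdges f ↔ ∃ a b : Fin 4, K4e.Adj a b ∧ s(f a, f b) = e := by
  constructor
  · rintro ⟨e', he', rfl⟩
    induction e' using Sym2.ind with
    | _ a b => exact ⟨a, b, he', rfl⟩
  · rintro ⟨a, b, hab, rfl⟩
    exact ⟨s(a, b), hab, rfl⟩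

lemma copyEdges_subset_edgeSet_iff {H : SimpleGraph V} {f : Fin 4 → V} :
    copyEdges f ⊆ H.edgeSet ↔ ∀ a b : Fin 4, K4e.Adj a b → H.Adj (f a) (f b) := by
  simp only [Set.subset_def, mem_copyEdges]
  constructor
  · exact fun h a b hab => h _ ⟨a, b, hab, rfl⟩
  · rintro h _ ⟨a, b, hab, rfl⟩
    exact h a b hab

lemma disjoint_copyEdges_iff {f g : Fin 4 → V} :
    Disjoint (copyEdges f) (copyEdges g) ↔
      ∀ a b c d : Fin 4, K4e.Adj a b → K4e.Adj c d → s(f a, f b) ≠ s(g c, g d) := by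
  simp only [Set.disjoint_left, mem_copyEdges]
  constructor
  · rintro h a b c d hab hcd heq
    exact h ⟨a, b, hab, rfl⟩ ⟨c, d, hcd, heq.symm⟩
  · rintro h _ ⟨a, b, hab, rfl⟩ ⟨c, d, hcd, heq⟩
    exact h a b c d hab hcd heq.symm

lemma mk_mem_leave_iff {H : SimpleGraph V} {B : Finset (Fin 4 → V)} {x y : V} :
    s(x, y) ∈ leave H B ↔
      H.Adj x y ∧ ∀ f ∈ B, ∀ a b : Fin 4, K4e.Adj a b → s(f a, f b) ≠ s(x, y) := by
  simp only [leave, Set.mem_sdiff, SimpleGraph.mem_edgeSet, Set.mem_iUnion, mem_copyEdges,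
    exists_prop, not_exists, not_and]

end copyEdges

set_option synthInstance.maxSize 4096 in
theorem stmt13 :
    ∃ B : Finset (Fin 4 → Fin 8),
      B = {![0, 1, 2, 3], ![0, 5, 6, 7], ![1, 4, 6, 7], ![4, 5, 2, 3]} ∧
      B.card = 4 ∧ IsK4ePacking K4x2 B ∧
      leave K4x2 B = {s(2, 3), s(3, 6), s(6, 7), s(7, 2)} := by
  refine ⟨_, rfl, by decide, ⟨?_, ?_, ?_⟩, ?_⟩
  · simp only [Finset.forall_mem_insert, Finset.mem_singleton, forall_eq]
    decide
  · simp only [copyEdges_subset_edgeSet_iff, Finset.forall_mem_insert, Finset.mem_singleton,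
      forall_eq]
    decide
  · simp only [disjoint_copyEdges_iff, Finset.forall_mem_insert, Finset.mem_singleton, forall_eq]
    decide
  · ext e
    induction e using Sym2.ind with
    | _ x y =>
      simp only [mk_mem_leave_iff, Finset.forall_mem_insert, Finset.mem_singleton, forall_eq,
        Set.mem_insert_iff, Set.mem_singleton_iff]
      revert x y
      decide
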